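/- Let A be a finite-dimensional unimodular Hopf algebra over a field k and let λ : A → k be a left integral in the dual. Then λ is invariant under the conjugate action: for all a, b ∈ A, λ(a₍₁₎ b S(a₍₂₎)) = ε(a) λ(b). -/

import Mathlib

/-!
A nonzero left cointegral `λ` is nondegenerate: by `S(b₁) λ(b₂ a) = a₁ λ(b a₂)`, if `λ(A x) = 0`
then the same holds for the right legs of `Δ x` in a basis of the left legs, which forces
`ε(x) = 0` and then `x = 0`. In finite dimension `x ↦ λ(· x)` is therefore bijective, which
yields a left integral `Λ` with `λ(Λ) = 1`, two-sided by unimodularity. Evaluating the same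
identity at `a = Λ` and at `b = Λ` identifies the Nakayama automorphism of `λ` as `S²`, i.e.
`λ(x y) = λ(y S²(x))`, and then
`λ(a₁ b S(a₂)) = λ(b S(a₂) S²(a₁)) = λ(b S(S(a₁) a₂)) = ε(a) λ(b)`.
-/

open scoped TensorProduct
open Coalgebra HopfAlgebra

namespace Coalgebra

variable {R A : Type*} [CommSemiring R] [AddCommMonoid A] [Module R A] [Coalgebra R A]

lemma sum_counit_right_smul {a : A} {ι : Type*} (r : Repr R a ι) :
    ∑ i ∈ r.index, counit (R := R) (r.right i) • r.left i = a := by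
  have h := congrArg (_root_.TensorProduct.rid R A) (sum_tmul_counit_eq r)
  simpa only [map_sum, _root_.TensorProduct.rid_tmul, one_smul] using h

lemma exists_repr_left_eq_basis {ι : Type*} (b : Module.Basis ι R A) (a : A) :
    ∃ r : Repr R a ι, r.left = b := by
  obtain ⟨c, hc⟩ := TensorProduct.eq_repr_basis_left b (comul (R := R) a)
  exact ⟨⟨c.support, b, c, hc⟩, rfl⟩

end Coalgebra

section

variable {R A : Type*} [CommSemiring R] [Semiring A] [Algebra R A]

lemma rid_lTensor_tmul_one_mul (lam : A →ₗ[R] R) (x : A) (t : A ⊗[R] A) :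
    TensorProduct.rid R A (lam.lTensor A ((x ⊗ₜ 1) * t)) =
      x * TensorProduct.rid R A (lam.lTensor A t) := by
  induction t with
  | zero => simp
  | tmul u v => simp
  | add t t' ht ht' => simp only [mul_add, map_add, ht, ht']

end

namespace HopfAlgebra

section Semiring

variable {R A : Type*} [CommSemiring R] [Semiring A] [HopfAlgebra R A]

variable (R) in
def IsLeftIntegral (Λ : A) : Prop := ∀ a : A, a * Λ = counit (R := R) a • Λ

variable (R) in
def IsRightIntegral (Λ : A) : Prop := ∀ a : A, Λ * a = counit (R := R) a • Λ

/-- A left integral in the dual `A*`. -/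
def IsLeftCointegral (lam : A →ₗ[R] R) : Prop :=
  ∀ a : A, TensorProduct.rid R A (lam.lTensor A (comul a)) = lam a • 1

lemma sum_antipode_tmul_one_mul_comul {b : A} {ι : Type*} (rb : Repr R b ι) :
    ∑ i ∈ rb.index, (antipode R (rb.left i) ⊗ₜ[R] (1 : A)) * comul (rb.right i) =
      1 ⊗ₜ b := by
  let Φ : A ⊗[R] (A ⊗[R] A) →ₗ[R] A ⊗[R] A :=
    (LinearMap.mul' R A ∘ₗ (antipode R).rTensor A).rTensor A ∘ₗ
      (TensorProduct.assoc R A A A).symm.toLinearMap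
  have h := congrArg Φ
    (sum_tmul_tmul_eq rb (fun i => ℛ R (rb.left i)) (fun i => ℛ R (rb.right i)))
  simp only [Φ, map_sum, LinearMap.comp_apply, LinearEquiv.coe_coe,
    TensorProduct.assoc_symm_tmul, LinearMap.rTensor_tmul, LinearMap.mul'_apply] at h
  calc _ = ∑ i ∈ rb.index, ∑ j ∈ (ℛ R (rb.right i)).index,
          (antipode R (rb.left i) * (ℛ R (rb.right i)).left j) ⊗ₜ[R]
            (ℛ R (rb.right i)).right j := by
        simp only [← (ℛ R (rb.right _)).eq, Finset.mul_sum, Algebra.TensorProduct.tmul_mul_tmul,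
          one_mul]
    _ = ∑ i ∈ rb.index, (1 : A) ⊗ₜ[R] (counit (R := R) (rb.left i) • rb.right i) := by
        simp only [← h, ← TensorProduct.sum_tmul, sum_antipode_mul_eq_smul,
          TensorProduct.smul_tmul]
    _ = 1 ⊗ₜ b := by rw [← TensorProduct.tmul_sum, sum_counit_smul]

variable {lam : A →ₗ[R] R}

lemma IsLeftCointegral.sum_smul_antipode_eq_sum_smul (hlam : IsLeftCointegral lam) {a b : A}
    {ι κ : Type*} (ra : Repr R a ι) (rb : Repr R b κ) :
    ∑ i ∈ rb.index, lam (rb.right i * a) • antipode R (rb.left i) =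
      ∑ i ∈ ra.index, lam (b * ra.right i) • ra.left i := by
  calc _ = ∑ i ∈ rb.index, antipode R (rb.left i) *
          TensorProduct.rid R A (lam.lTensor A (comul (rb.right i * a))) := by
        simp only [hlam _, mul_smul_comm, mul_one]
    _ = TensorProduct.rid R A (lam.lTensor A ((1 ⊗ₜ b) * comul a)) := by
        simp only [← rid_lTensor_tmul_one_mul, ← map_sum, Bialgebra.comul_mul, ← mul_assoc,
          ← Finset.sum_mul, sum_antipode_tmul_one_mul_comul]
    _ = _ := by
        simp [← ra.eq, Finset.mul_sum, Algebra.TensorProduct.tmul_mul_tmul]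

lemma IsLeftCointegral.sum_smul_eq_antipode (hlam : IsLeftCointegral lam) {Λ : A}
    (hΛ : IsLeftIntegral R Λ) (hΛ1 : lam Λ = 1) (x : A) :
    ∑ i ∈ (ℛ R Λ).index, lam (x * (ℛ R Λ).right i) • (ℛ R Λ).left i = antipode R x := by
  rw [← hlam.sum_smul_antipode_eq_sum_smul _ (ℛ R x)]
  conv_rhs => rw [← sum_counit_right_smul (ℛ R x), map_sum]
  simp only [hΛ _, map_smul, hΛ1, smul_eq_mul, mul_one]

lemma IsLeftCointegral.sum_smul_antipode_eq (hlam : IsLeftCointegral lam) {Λ : A}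
    (hΛ : IsRightIntegral R Λ) (hΛ1 : lam Λ = 1) (z : A) :
    ∑ i ∈ (ℛ R Λ).index, lam ((ℛ R Λ).right i * z) • antipode R ((ℛ R Λ).left i) = z := by
  rw [hlam.sum_smul_antipode_eq_sum_smul (ℛ R z)]
  simp only [hΛ _, map_smul, hΛ1, smul_eq_mul, mul_one, sum_counit_right_smul]

lemma lam_conj_eq_counit_mul_of_lam_mul_eq
    (hnak : ∀ x y : A, lam (x * y) = lam (y * antipode R (antipode R x))) (a b : A) :
    lam (LinearMap.mul' R A (TensorProduct.map (LinearMap.mulRight R b) (antipode R) (comul a))) =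
      counit (R := R) a * lam b := by
  rw [← (ℛ R a).eq]
  simp only [map_sum, TensorProduct.map_tmul, LinearMap.mul'_apply, LinearMap.mulRight_apply]
  calc _ = ∑ i ∈ (ℛ R a).index,
        lam (b * antipode R (antipode R ((ℛ R a).left i) * (ℛ R a).right i)) := by
        simp only [mul_assoc, hnak ((ℛ R a).left _), antipode_mul_antidistrib]
    _ = counit (R := R) a * lam b := by
        rw [← map_sum, ← Finset.mul_sum, ← map_sum, sum_antipode_mul_eq_smul, map_smul,
          antipode_one, mul_smul_comm, mul_one, map_smul, smul_eq_mul]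

end Semiring

section Field

variable {k A : Type*} [Field k] [Ring A] [HopfAlgebra k A]

def frobeniusMap (lam : A →ₗ[k] k) : A →ₗ[k] Module.Dual k A :=
  (LinearMap.mul k A).flip.compr₂ lam

@[simp]
lemma frobeniusMap_apply (lam : A →ₗ[k] k) (x y : A) : frobeniusMap lam x y = lam (y * x) := rfl

variable {lam : A →ₗ[k] k}

lemma IsLeftCointegral.frobeniusMap_right_eq_zero (hlam : IsLeftCointegral lam) {x : A}
    (hx : frobeniusMap lam x = 0) {ι : Type*} (r : Repr k x ι) (hr : LinearIndependent k r.left)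
    {i : ι} (hi : i ∈ r.index) : frobeniusMap lam (r.right i) = 0 := by
  ext y
  have h := hlam.sum_smul_antipode_eq_sum_smul r (ℛ k y)
  simp only [show ∀ z, lam (z * x) = 0 from fun z => LinearMap.congr_fun hx z, zero_smul,
    Finset.sum_const_zero] at h
  exact linearIndependent_iff'.mp hr _ _ h.symm i hi

lemma IsLeftCointegral.counit_eq_zero_of_frobeniusMap_eq_zero (hlam : IsLeftCointegral lam)
    (h0 : lam ≠ 0) {x : A} (hx : frobeniusMap lam x = 0) : counit (R := k) x = 0 := by
  obtain ⟨y, hy⟩ : ∃ y, lam y ≠ 0 := not_forall.mp fun h => h0 (LinearMap.ext h)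
  obtain ⟨r, hr⟩ := exists_repr_left_eq_basis (Module.Free.chooseBasis k A) x
  have hr' : LinearIndependent k r.left := hr ▸ (Module.Free.chooseBasis k A).linearIndependent
  have : counit (R := k) x * lam y = 0 := by
    calc _ = lam (y * ∑ i ∈ r.index, antipode k (r.left i) * r.right i) := by
          rw [sum_antipode_mul_eq_smul, mul_smul_comm, mul_one, map_smul, smul_eq_mul]
      _ = ∑ i ∈ r.index, frobeniusMap lam (r.right i) (y * antipode k (r.left i)) := by
          simp only [Finset.mul_sum, map_sum, frobeniusMap_apply, mul_assoc]
      _ = 0 := Finset.sum_eq_zero fun i hi => by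
          rw [hlam.frobeniusMap_right_eq_zero hx r hr' hi, LinearMap.zero_apply]
  exact (mul_eq_zero.mp this).resolve_right hy

lemma IsLeftCointegral.frobeniusMap_injective (hlam : IsLeftCointegral lam) (h0 : lam ≠ 0) :
    Function.Injective (frobeniusMap lam) := by
  refine (injective_iff_map_eq_zero _).mpr fun x hx => ?_
  obtain ⟨r, hr⟩ := exists_repr_left_eq_basis (Module.Free.chooseBasis k A) x
  have hr' : LinearIndependent k r.left := hr ▸ (Module.Free.chooseBasis k A).linearIndependent
  rw [← sum_counit_right_smul r]
  exact Finset.sum_eq_zero fun i hi => by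
    rw [hlam.counit_eq_zero_of_frobeniusMap_eq_zero h0
      (hlam.frobeniusMap_right_eq_zero hx r hr' hi), zero_smul]

variable [FiniteDimensional k A]

lemma IsLeftCointegral.frobeniusMap_surjective (hlam : IsLeftCointegral lam) (h0 : lam ≠ 0) :
    Function.Surjective (frobeniusMap lam) :=
  (LinearMap.injective_iff_surjective_of_finrank_eq_finrank Subspace.dual_finrank_eq.symm).mp
    (hlam.frobeniusMap_injective h0)

lemma IsLeftCointegral.exists_isLeftIntegral (hlam : IsLeftCointegral lam) (h0 : lam ≠ 0) :
    ∃ Λ : A, IsLeftIntegral k Λ ∧ lam Λ = 1 := by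
  obtain ⟨Λ, hΛ⟩ := hlam.frobeniusMap_surjective h0 (counit (R := k))
  have hΛ' : ∀ y, lam (y * Λ) = counit (R := k) y := fun y => LinearMap.congr_fun hΛ y
  refine ⟨Λ, fun a => hlam.frobeniusMap_injective h0 (LinearMap.ext fun y => ?_), ?_⟩
  · simp [← mul_assoc, hΛ', mul_comm]
  · simpa using hΛ' 1

lemma IsLeftCointegral.lam_mul_eq_lam_mul_antipode_antipode (hlam : IsLeftCointegral lam)
    (hu : ∀ Λ : A, IsLeftIntegral k Λ → IsRightIntegral k Λ) (x y : A) :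
    lam (x * y) = lam (y * antipode k (antipode k x)) := by
  rcases eq_or_ne lam 0 with rfl | h0
  · simp
  obtain ⟨Λ, hΛ, hΛ1⟩ := hlam.exists_isLeftIntegral h0
  obtain ⟨z, hz⟩ := hlam.frobeniusMap_surjective h0 (lam ∘ₗ LinearMap.mulLeft k x)
  have hz' : ∀ w, lam (w * z) = lam (x * w) := fun w => LinearMap.congr_fun hz w
  have hzx : z = antipode k (antipode k x) := by
    rw [← hlam.sum_smul_antipode_eq (hu Λ hΛ) hΛ1 z, ← hlam.sum_smul_eq_antipode hΛ hΛ1 x]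
    simp only [hz', map_sum, map_smul]
  rw [← hzx, hz']

end Field

end HopfAlgebra

/-- Let `A` be a finite-dimensional unimodular Hopf algebra over a field
`k` and let `λ` be a left integral in the dual.  Then `λ` is invariant under the conjugate
action: `λ(a₍₁₎ b S(a₍₂₎)) = ε(a) λ(b)` for all `a b ∈ A`. -/
theorem lam_conjugate_invariant (k A : Type*) [Field k] [Ring A] [HopfAlgebra k A]
    [FiniteDimensional k A]
    (hu : ∀ Λ : A, (∀ a : A, a * Λ = Coalgebra.counit (R := k) a • Λ) ↔
      (∀ a : A, Λ * a = Coalgebra.counit (R := k) a • Λ))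
    (lam : A →ₗ[k] k)
    (hlam : ∀ a : A, (TensorProduct.rid k A)
        ((LinearMap.lTensor A lam) (Coalgebra.comul (R := k) a)) = lam a • 1) :
    ∀ a b : A,
      lam ((LinearMap.mul' k A)
        (TensorProduct.map (LinearMap.mulRight k b) (HopfAlgebra.antipode (R := k))
          (Coalgebra.comul (R := k) a))) =
      Coalgebra.counit (R := k) a * lam b :=
  lam_conj_eq_counit_mul_of_lam_mul_eq
    (IsLeftCointegral.lam_mul_eq_lam_mul_antipode_antipode hlam fun Λ => (hu Λ).mp)
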